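/- arXiv:1806.04490 — 3 statements merged into one kernel-verified Lean document; each statement's English description precedes it below -/
import Mathlib

section
/- Any complex eigenvalue σ ≠ 1 of the π-return matrix P^π_D satisfies Re σ ≤ 1 - λ - γ, where γ = 1-λ - max{Re σ' : σ' eigenvalue of P_D, σ' ≠ 1-λ} > 0 is the spectral gap of P_D. -/
/-!
Since `π` is a left eigenvector of `P` with `∑ π = 1`, it is a left fixed vector of `P^π`, so
an eigenvector `P^π v = σ v` with `σ ≠ 1` satisfies `π ⬝ v = 0`. The rank-one correction `q πᵀ`
then kills `v`, so `v` is an eigenvector of `P` itself for `σ`, and the spectral gap of `P`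
applies unless `σ = 1 - λ`. That case is impossible: by a Perron–Frobenius argument every real
`(1 - λ)`-eigenvector of `P` with a positive entry is positive, so no nonzero one is orthogonal
to the positive vector `π`.
-/

open Matrix BigOperators

/-- `σ` is a (complex) eigenvalue of the matrix `M`. -/
def IsEigval {D : Type*} [Fintype D] [DecidableEq D] (M : Matrix D D ℂ) (σ : ℂ) : Prop :=
  ∃ v : D → ℂ, v ≠ 0 ∧ M.mulVec v = σ • v

/-- Irreducibility of a nonnegative matrix. -/
def MatIrreducible {D : Type*} [Fintype D] [DecidableEq D] (P : Matrix D D ℝ) : Prop :=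
  ∀ x y : D, ∃ n : ℕ, 0 < (P ^ n) x y

section PiReturn

variable {R : Type*} {D : Type*} [Fintype D]

/-- The `π`-return matrix `P^π = P + q πᵀ`, where `q = 1 - P 1` is the killing rate. -/
def piReturn [CommRing R] (P : Matrix D D R) (π : D → R) : Matrix D D R :=
  P + vecMulVec (1 - P *ᵥ 1) π

theorem vecMul_piReturn [CommRing R] {P : Matrix D D R} {π : D → R} {μ : R}
    (hπeig : π ᵥ* P = μ • π) (hπsum : π ⬝ᵥ 1 = 1) : π ᵥ* piReturn P π = π := by
  rw [piReturn, vecMul_add, vecMul_vecMulVec, dotProduct_sub, dotProduct_mulVec, hπeig,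
    smul_dotProduct, hπsum, smul_eq_mul, mul_one, sub_smul, one_smul]
  abel

theorem dotProduct_eq_zero_and_mulVec_eq_smul_of_piReturn [Field R] {P : Matrix D D R}
    {π v : D → R} {μ σ : R} (hπeig : π ᵥ* P = μ • π) (hπsum : π ⬝ᵥ 1 = 1)
    (hv : piReturn P π *ᵥ v = σ • v) (hσ : σ ≠ 1) : π ⬝ᵥ v = 0 ∧ P *ᵥ v = σ • v := by
  have hfix : σ * (π ⬝ᵥ v) = π ⬝ᵥ v := by
    rw [← smul_eq_mul, ← dotProduct_smul, ← hv, dotProduct_mulVec, vecMul_piReturn hπeig hπsum]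
  have hπv : π ⬝ᵥ v = 0 :=
    (mul_eq_zero.mp (by linear_combination hfix : (σ - 1) * (π ⬝ᵥ v) = 0)).resolve_left
      (sub_ne_zero.mpr hσ)
  refine ⟨hπv, ?_⟩
  rwa [piReturn, add_mulVec, vecMulVec_mulVec, hπv, MulOpposite.op_zero, zero_smul,
    add_zero] at hv

end PiReturn

section ComplexEigenvectors

variable {m D : Type*}

theorem comp_map_ofReal_mulVec [Fintype D] (L : ℂ →ₗ[ℝ] ℝ) (M : Matrix m D ℝ) (v : D → ℂ) :
    L ∘ (M.map Complex.ofReal *ᵥ v) = M *ᵥ (L ∘ v) := by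
  funext x
  simp [mulVec, dotProduct, ← Complex.real_smul]

theorem comp_ofReal_smul (L : ℂ →ₗ[ℝ] ℝ) (μ : ℝ) (v : D → ℂ) :
    L ∘ ((μ : ℂ) • v) = μ • (L ∘ v) := by
  funext x
  simp only [Function.comp_apply, Pi.smul_apply, smul_eq_mul, ← Complex.real_smul, map_smul]

theorem apply_ofReal_comp_dotProduct [Fintype D] (L : ℂ →ₗ[ℝ] ℝ) (π : D → ℝ) (v : D → ℂ) :
    L ((Complex.ofReal ∘ π) ⬝ᵥ v) = π ⬝ᵥ (L ∘ v) := by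
  simp [dotProduct, ← Complex.real_smul]

end ComplexEigenvectors

theorem pow_mulVec_eq_pow_smul {R D : Type*} [CommSemiring R] [Fintype D] [DecidableEq D]
    {P : Matrix D D R} {μ : R} {f : D → R} (hf : P *ᵥ f = μ • f) (n : ℕ) :
    (P ^ n) *ᵥ f = μ ^ n • f := by
  induction n with
  | zero => simp
  | succ n ih => rw [pow_succ, ← mulVec_mulVec, hf, mulVec_smul, ih, smul_smul, pow_succ']

section PerronFrobenius

variable {D : Type*} [Fintype D] {P : Matrix D D ℝ} {π : D → ℝ} {μ : ℝ}

theorem mulVec_eq_smul_of_smul_le_mulVec {f : D → ℝ} (hπ : ∀ x, 0 < π x)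
    (hπeig : π ᵥ* P = μ • π) (hf : μ • f ≤ P *ᵥ f) : P *ᵥ f = μ • f := by
  have hpair : ∑ x, π x * (P *ᵥ f - μ • f) x = 0 := by
    change π ⬝ᵥ (P *ᵥ f - μ • f) = 0
    rw [dotProduct_sub, dotProduct_mulVec, hπeig, smul_dotProduct, dotProduct_smul, sub_self]
  have hterm := (Finset.sum_eq_zero_iff_of_nonneg fun x _ =>
    mul_nonneg (hπ x).le (sub_nonneg.mpr (hf x))).mp hpair
  funext x
  exact sub_eq_zero.mp ((mul_eq_zero.mp (hterm x (Finset.mem_univ x))).resolve_left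
    (hπ x).ne')

namespace MatIrreducible

variable [DecidableEq D]

theorem transpose (hirr : MatIrreducible P) : MatIrreducible Pᵀ := fun x y =>
  let ⟨n, hn⟩ := hirr y x
  ⟨n, by rwa [← transpose_pow]⟩

theorem pos_of_mulVec_eq_smul (hirr : MatIrreducible P) (hnn : ∀ x y, 0 ≤ P x y)
    {f : D → ℝ} (hf : 0 ≤ f) (hf0 : f ≠ 0) (heig : P *ᵥ f = μ • f) (x : D) : 0 < f x := by
  obtain ⟨y, hy⟩ := (Pi.lt_def.mp (lt_of_le_of_ne hf (Ne.symm hf0))).2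
  obtain ⟨n, hn⟩ := hirr x y
  have hpath : (P ^ n) x y * f y ≤ μ ^ n * f x := calc
    _ ≤ ∑ z, (P ^ n) x z * f z :=
      Finset.single_le_sum (fun z _ => mul_nonneg (pow_apply_nonneg hnn n x z) (hf z))
        (Finset.mem_univ y)
    _ = μ ^ n * f x := congrFun (pow_mulVec_eq_pow_smul heig n) x
  by_contra hfx
  rw [le_antisymm (not_lt.mp hfx) (hf x), mul_zero] at hpath
  exact (mul_pos hn hy).not_ge hpath

/-- The positive part `w⁺` of an eigenvector satisfies `μ w⁺ ≤ P w⁺`, hence is itself an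
eigenvector, and is then positive by `pos_of_mulVec_eq_smul`. -/
theorem pos_of_mulVec_eq_smul_of_pos_apply (hirr : MatIrreducible P) (hnn : ∀ x y, 0 ≤ P x y)
    (hπ : ∀ x, 0 < π x) (hπeig : π ᵥ* P = μ • π) {w : D → ℝ} (hw : P *ᵥ w = μ • w) {x₀ : D}
    (hx₀ : 0 < w x₀) (x : D) : 0 < w x := by
  set wpos : D → ℝ := fun x => max (w x) 0
  have hwpos_nonneg : 0 ≤ wpos := fun x => le_max_right _ _
  have hmono : P *ᵥ w ≤ P *ᵥ wpos := fun x =>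
    Finset.sum_le_sum fun y _ => mul_le_mul_of_nonneg_left (le_max_left _ _) (hnn x y)
  have hsub : μ • wpos ≤ P *ᵥ wpos := by
    intro x
    rcases le_or_gt (w x) 0 with hx | hx
    · calc (μ • wpos) x = 0 := by simp [wpos, max_eq_right hx]
        _ ≤ (P *ᵥ wpos) x := Finset.sum_nonneg fun y _ => mul_nonneg (hnn x y) (hwpos_nonneg y)
    · calc (μ • wpos) x = (P *ᵥ w) x := by simp [wpos, max_eq_left hx.le, hw]
        _ ≤ (P *ᵥ wpos) x := hmono x
  have hne : wpos ≠ 0 := fun h => by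
    simpa [wpos, hx₀.not_ge] using congrFun h x₀
  simpa [wpos] using hirr.pos_of_mulVec_eq_smul hnn hwpos_nonneg hne
    (mulVec_eq_smul_of_smul_le_mulVec hπ hπeig hsub) x

theorem eq_zero_of_mulVec_eq_smul_of_dotProduct_eq_zero (hirr : MatIrreducible P)
    (hnn : ∀ x y, 0 ≤ P x y) (hπ : ∀ x, 0 < π x) (hπeig : π ᵥ* P = μ • π) {w : D → ℝ}
    (hw : P *ᵥ w = μ • w) (hπw : π ⬝ᵥ w = 0) : w = 0 := by
  have hpos_pair : ∀ u : D → ℝ, P *ᵥ u = μ • u → ∀ x₀, 0 < u x₀ → 0 < π ⬝ᵥ u :=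
    fun u hu x₀ hx₀ => Finset.sum_pos
      (fun x _ => mul_pos (hπ x) (hirr.pos_of_mulVec_eq_smul_of_pos_apply hnn hπ hπeig hu hx₀ x))
      ⟨x₀, Finset.mem_univ x₀⟩
  by_contra hw0
  obtain ⟨x₀, hx₀⟩ := Function.ne_iff.mp hw0
  rcases hx₀.lt_or_gt with hneg | hpos
  · have := hpos_pair (-w) (by rw [mulVec_neg, hw, smul_neg]) x₀ (neg_pos.mpr hneg)
    rw [dotProduct_neg, hπw, neg_zero] at this
    exact this.false
  · exact (hpos_pair w hw x₀ hpos).ne' hπw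

theorem eq_zero_of_map_mulVec_eq_smul_of_dotProduct_eq_zero (hirr : MatIrreducible P)
    (hnn : ∀ x y, 0 ≤ P x y) (hπ : ∀ x, 0 < π x) (hπeig : π ᵥ* P = μ • π) {v : D → ℂ}
    (hv : P.map Complex.ofReal *ᵥ v = (μ : ℂ) • v) (hπv : (Complex.ofReal ∘ π) ⬝ᵥ v = 0) :
    v = 0 := by
  have hpart : ∀ L : ℂ →ₗ[ℝ] ℝ, L ∘ v = 0 := fun L =>
    hirr.eq_zero_of_mulVec_eq_smul_of_dotProduct_eq_zero hnn hπ hπeig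
      (by rw [← comp_map_ofReal_mulVec, hv, comp_ofReal_smul])
      (by rw [← apply_ofReal_comp_dotProduct, hπv, map_zero])
  funext x
  exact Complex.ext (congrFun (hpart Complex.reLm) x) (congrFun (hpart Complex.imLm) x)

end MatIrreducible

end PerronFrobenius

theorem pi_return_eigenvalues_spectral_gap_general
    {D : Type*} [Fintype D] [DecidableEq D]
    (P : Matrix D D ℝ)
    (hnn : ∀ x y, 0 ≤ P x y)
    (hirr : MatIrreducible P)
    (lam : ℝ)
    (π : D → ℝ)
    (hπnn : ∀ x, 0 ≤ π x) (hπsum : ∑ x, π x = 1)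
    (hπeig : Pᵀ.mulVec π = (1 - lam) • π)
    (γ : ℝ)
    (hgap_ub : ∀ σ : ℂ, IsEigval (P.map Complex.ofReal) σ → σ ≠ ((1 - lam : ℝ) : ℂ) →
      σ.re ≤ 1 - lam - γ) :
    ∀ σ : ℂ,
      IsEigval ((Matrix.of fun x y => P x y + (1 - ∑ z, P x z) * π y).map Complex.ofReal) σ →
      σ ≠ 1 → σ.re ≤ 1 - lam - γ := by
  rintro σ ⟨v, hv0, hv⟩ hσ1
  have hπeig' : π ᵥ* P = (1 - lam) • π := by rwa [← mulVec_transpose]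
  have hπpos : ∀ x, 0 < π x := hirr.transpose.pos_of_mulVec_eq_smul (fun x y => hnn y x)
    hπnn (by rintro rfl; simp at hπsum) hπeig
  have hπeigC : (Complex.ofReal ∘ π) ᵥ* P.map Complex.ofReal =
      ((1 - lam : ℝ) : ℂ) • (Complex.ofReal ∘ π) := by
    funext x
    exact (RingHom.map_vecMul Complex.ofRealHom P π x).symm.trans (by simp [hπeig'])
  have hπsumC : (Complex.ofReal ∘ π) ⬝ᵥ 1 = 1 := by
    simpa [dotProduct] using congrArg Complex.ofReal hπsum
  have hret : (Matrix.of fun x y => P x y + (1 - ∑ z, P x z) * π y).map Complex.ofReal =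
      piReturn (P.map Complex.ofReal) (Complex.ofReal ∘ π) := by
    ext x y
    simp [piReturn, vecMulVec, mulVec, dotProduct]
  obtain ⟨hπv, hPv⟩ :=
    dotProduct_eq_zero_and_mulVec_eq_smul_of_piReturn hπeigC hπsumC (hret ▸ hv) hσ1
  by_cases hσ : σ = ((1 - lam : ℝ) : ℂ)
  · subst hσ
    exact absurd (hirr.eq_zero_of_map_mulVec_eq_smul_of_dotProduct_eq_zero hnn hπpos hπeig' hPv hπv)
      hv0
  · exact hgap_ub σ ⟨v, hv0, hPv⟩ hσ

theorem pi_return_eigenvalues_spectral_gap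
    {D : Type*} [Fintype D] [DecidableEq D]
    (hcard : 2 ≤ Fintype.card D)
    (P : Matrix D D ℝ)
    (hnn : ∀ x y, 0 ≤ P x y)
    (hrow : ∀ x, ∑ y, P x y ≤ 1)
    (hirr : MatIrreducible P)
    (lam : ℝ)
    (hsr_ub : ∀ σ : ℂ, IsEigval (P.map Complex.ofReal) σ → ‖σ‖ ≤ 1 - lam)
    (hsr_attained : ∃ σ : ℂ, IsEigval (P.map Complex.ofReal) σ ∧ ‖σ‖ = 1 - lam)
    (π : D → ℝ)
    (hπnn : ∀ x, 0 ≤ π x) (hπsum : ∑ x, π x = 1)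
    (hπeig : Pᵀ.mulVec π = (1 - lam) • π)
    (γ : ℝ) (hγpos : 0 < γ)
    (hgap_ub : ∀ σ : ℂ, IsEigval (P.map Complex.ofReal) σ → σ ≠ ((1 - lam : ℝ) : ℂ) →
      σ.re ≤ 1 - lam - γ)
    (hgap_attained : ∃ σ : ℂ, IsEigval (P.map Complex.ofReal) σ ∧ σ ≠ ((1 - lam : ℝ) : ℂ) ∧
      σ.re = 1 - lam - γ) :
    ∀ σ : ℂ,
      IsEigval ((Matrix.of fun x y => P x y + (1 - ∑ z, P x z) * π y).map Complex.ofReal) σ →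
      σ ≠ 1 → σ.re ≤ 1 - lam - γ :=
  pi_return_eigenvalues_spectral_gap_general P hnn hirr lam π hπnn hπsum hπeig γ hgap_ub
end

section
/- Let B̃ be a linear endomorphism of a finite dimensional real inner product space with all complex eigenvalues having negative real part, and let A be symmetric and positive definite. Then the solution K̃ = 2∫_0^∞ e^{sB̃} A e^{sB̃*} ds of the Lyapunov equation B̃K̃ + K̃B̃* + 2A = 0 is positive definite. -/
/-!
All eigenvalues of `B` have negative real part, so, after passing to complex matrices, the spectrum
of `exp B` lies in the open unit disc: the `μ`-eigenspace of `exp B` is `B`-invariant, hence holds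
an eigenvector of `B` for some `λ`, and then `μ = e^λ`. Gelfand's formula gives `‖exp (n • B)‖ < 1`
for some `n ≥ 1`, so `‖exp (t • B)‖` decays exponentially and the integral converges. The integrand
is positive definite for every `s`: at `v ≠ 0` its quadratic form is `⟪A w, w⟫` with
`w = exp (s • B*) v ≠ 0`.
-/

open NormedSpace Asymptotics Filter Set MeasureTheory Module.End
open scoped RealInnerProductSpace

section ExpDecay

variable {𝔸 : Type*} [NormedRing 𝔸]

lemma norm_pow_mul_le (x y : 𝔸) (k : ℕ) : ‖x ^ k * y‖ ≤ ‖x‖ ^ k * ‖y‖ := by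
  rcases Nat.eq_zero_or_pos k with rfl | hk
  · simp
  · exact (norm_mul_le _ _).trans (by gcongr; exact norm_pow_le' x hk)

/-- Splitting `t = ⌊t⌋ + r` with `r ∈ [0, 1)`, `exp (t • a) = (exp a) ^ ⌊t⌋ * exp (r • a)`, and the
second factor stays bounded. -/
theorem isBigO_exp_smul_of_norm_exp_lt_one [NormedAlgebra ℝ 𝔸] [CompleteSpace 𝔸] {a : 𝔸}
    (ha : ‖exp a‖ < 1) :
    ∃ ε > 0, (fun t : ℝ => exp (t • a)) =O[atTop] fun t => Real.exp (-ε * t) := by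
  let := NormedAlgebra.restrictScalars ℚ ℝ 𝔸
  set q := max ‖exp a‖ 2⁻¹
  have hq0 : 0 < q := lt_max_of_lt_right (by norm_num)
  have hq1 : q < 1 := max_lt ha (by norm_num)
  obtain ⟨M, hM⟩ := isCompact_Icc.exists_bound_of_continuousOn (s := Icc (0 : ℝ) 1)
    (f := fun r : ℝ => exp (r • a))
    (exp_continuous.comp (continuous_id.smul continuous_const)).continuousOn
  refine ⟨-Real.log q, neg_pos.2 (Real.log_neg hq0 hq1), .of_bound (M / q) ?_⟩
  filter_upwards [eventually_ge_atTop 0] with t ht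
  set k := ⌊t⌋₊
  have hsplit : exp (t • a) = exp a ^ k * exp ((t - k) • a) := by
    rw [← exp_nsmul, ← Nat.cast_smul_eq_nsmul ℝ, ← exp_add_of_commute
      ((Commute.refl a).smul_left _ |>.smul_right _), ← add_smul, add_sub_cancel]
  have hr : t - k ∈ Icc (0 : ℝ) 1 :=
    ⟨sub_nonneg.2 (Nat.floor_le ht), by linarith [Nat.lt_floor_add_one t]⟩
  have hqk : q ^ k ≤ Real.exp (-(-Real.log q) * t) / q := by
    rw [neg_neg, ← Real.rpow_def_of_pos hq0, ← Real.rpow_sub_one hq0.ne',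
      ← Real.rpow_natCast]
    exact Real.rpow_le_rpow_of_exponent_ge hq0 hq1.le (by linarith [Nat.lt_floor_add_one t])
  calc ‖exp (t • a)‖ ≤ ‖exp a‖ ^ k * ‖exp ((t - k) • a)‖ := by
        rw [hsplit]; exact norm_pow_mul_le _ _ _
    _ ≤ q ^ k * M := by
        gcongr
        · exact le_max_left _ _
        · exact hM _ hr
    _ ≤ Real.exp (-(-Real.log q) * t) / q * M := by
        gcongr
        exact (norm_nonneg _).trans (hM 0 (by simp))
    _ = M / q * ‖Real.exp (-(-Real.log q) * t)‖ := by
        rw [Real.norm_eq_abs, abs_of_pos (Real.exp_pos _)]; ring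

/-- Gelfand's formula gives `‖exp (n • a)‖ = ‖(exp a) ^ n‖ < 1` for some `n ≥ 1`. -/
theorem isBigO_exp_smul_of_forall_mem_spectrum_exp [NormedAlgebra ℂ 𝔸] [CompleteSpace 𝔸] {a : 𝔸}
    (ha : ∀ z ∈ spectrum ℂ (exp a), ‖z‖ < 1) :
    ∃ ε > 0, (fun t : ℝ => exp (t • a)) =O[atTop] fun t => Real.exp (-ε * t) := by
  rcases subsingleton_or_nontrivial 𝔸 with h𝔸 | h𝔸
  · exact ⟨1, one_pos, (isBigO_zero _ _).congr_left fun _ => Subsingleton.elim _ _⟩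
  let := NormedAlgebra.restrictScalars ℚ ℂ 𝔸
  have hρ : spectralRadius ℂ (exp a) < 1 := by
    simpa using spectrum.spectralRadius_lt_of_forall_lt (exp a) (r := 1)
      fun z hz => by exact_mod_cast ha z hz
  obtain ⟨n, hn_lt, hn⟩ := ((spectrum.pow_norm_pow_one_div_tendsto_nhds_spectralRadius
    (exp a)).eventually_lt_const hρ |>.and (eventually_ge_atTop 1)).exists
  have hn0 : (0 : ℝ) < n := by exact_mod_cast hn
  have hpow : ‖exp ((n : ℝ) • a)‖ < 1 := by
    rw [Nat.cast_smul_eq_nsmul, exp_nsmul]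
    by_contra! h
    exact (ENNReal.ofReal_lt_one.1 hn_lt).not_ge (Real.one_le_rpow h (by positivity))
  obtain ⟨ε, hε, hO⟩ := isBigO_exp_smul_of_norm_exp_lt_one hpow
  refine ⟨ε / n, div_pos hε hn0, ?_⟩
  convert hO.comp_tendsto (tendsto_id.atTop_div_const hn0) using 2 with t t
  · simp [smul_smul, div_mul_cancel₀ _ hn0.ne']
  · simp only [Function.comp, id]; ring_nf

end ExpDecay

namespace ContinuousLinearMap

lemma exp_apply_of_apply_eq_smul {𝕜 W : Type*} [RCLike 𝕜]
    [NormedAddCommGroup W] [NormedSpace 𝕜 W] [CompleteSpace W] {L : W →L[𝕜] W} {c : 𝕜} {w : W}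
    (hw : L w = c • w) : exp L w = exp c • w := by
  have hpow (n : ℕ) : (L ^ n) w = c ^ n • w := by
    induction n with
    | zero => simp
    | succ n ih =>
      rw [pow_succ']
      change L ((L ^ n) w) = _
      rw [ih, map_smul, hw, smul_smul, pow_succ]
  refine (((apply 𝕜 W w).hasSum (exp_series_hasSum_exp' (𝕂 := 𝕜) L))).unique ?_
  convert (exp_series_hasSum_exp' (𝕂 := 𝕜) c).smul_const w using 1
  ext n
  simp [hpow, smul_smul]

section Spectrum

variable {W : Type*} [NormedAddCommGroup W] [NormedSpace ℂ W] [FiniteDimensional ℂ W]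

/-- The `z`-eigenspace of `exp L` is `L`-invariant, so it contains an eigenvector of `L`. -/
theorem exists_hasEigenvalue_exp_eq_of_mem_spectrum_exp {L : W →L[ℂ] W}
    {z : ℂ} (hz : z ∈ spectrum ℂ (exp L)) :
    ∃ c, HasEigenvalue (L : Module.End ℂ W) c ∧ Complex.exp c = z := by
  have hz' : HasEigenvalue (↑(exp L) : Module.End ℂ W) z := by
    rw [hasEigenvalue_iff_mem_spectrum, ← AlgEquiv.spectrum_eq (Module.End.toContinuousLinearMap W)]
    exact hz
  have hcomm : Commute (↑(exp L) : Module.End ℂ W) L :=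
    (Commute.refl L).exp_left.map toLinearMapRingHom
  have hmaps := mapsTo_genEigenspace_of_comm hcomm z 1
  have : Nontrivial (eigenspace (↑(exp L) : Module.End ℂ W) z) :=
    Submodule.nontrivial_iff_ne_bot.mpr hz'
  obtain ⟨c, hc⟩ := exists_eigenvalue ((L : Module.End ℂ W).restrict hmaps)
  obtain ⟨u, hu⟩ := hc.exists_hasEigenvector
  have hu0 : (u : W) ≠ 0 := by simpa using hu.2
  have hLu : L u = c • (u : W) := congrArg Subtype.val hu.apply_eq_smul
  refine ⟨c, hasEigenvalue_of_hasEigenvector ⟨mem_eigenspace_iff.2 hLu, hu0⟩,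
    smul_left_injective ℂ hu0 ?_⟩
  change Complex.exp c • (u : W) = z • u
  rw [Complex.exp_eq_exp_ℂ, ← exp_apply_of_apply_eq_smul hLu]
  exact mem_eigenspace_iff.1 u.2

theorem norm_lt_one_of_mem_spectrum_exp {L : W →L[ℂ] W}
    (hL : ∀ c, HasEigenvalue (L : Module.End ℂ W) c → c.re < 0) {z : ℂ}
    (hz : z ∈ spectrum ℂ (exp L)) : ‖z‖ < 1 := by
  obtain ⟨c, hc, rfl⟩ := exists_hasEigenvalue_exp_eq_of_mem_spectrum_exp hz
  rw [Complex.norm_exp, Real.exp_lt_one_iff]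
  exact hL c hc

end Spectrum

end ContinuousLinearMap

theorem AlgHom.isBigO_exp_smul_of_injective {𝔸 𝔹 : Type*} [NormedRing 𝔸] [NormedAlgebra ℝ 𝔸]
    [FiniteDimensional ℝ 𝔸] [NormedRing 𝔹] [NormedAlgebra ℝ 𝔹] [CompleteSpace 𝔹]
    (Φ : 𝔸 →ₐ[ℝ] 𝔹) (hΦ : Function.Injective Φ) (a : 𝔸) {l : Filter ℝ} {g : ℝ → ℝ}
    (h : (fun t : ℝ => exp (t • Φ a)) =O[l] g) :
    (fun t : ℝ => exp (t • a)) =O[l] g := by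
  let := NormedAlgebra.restrictScalars ℚ ℝ 𝔸
  let := NormedAlgebra.restrictScalars ℚ ℝ 𝔹
  have : CompleteSpace 𝔸 := FiniteDimensional.complete ℝ 𝔸
  obtain ⟨K, -, hK⟩ := (Φ.toLinearMap.injective_iff_antilipschitz).1 hΦ
  refine IsBigO.trans (.of_bound K (Eventually.of_forall fun t => ?_)) h
  have hexp : Φ (exp (t • a)) = exp (t • Φ a) := by
    rw [map_exp Φ Φ.toLinearMap.continuous_of_finiteDimensional, map_smul]
  simpa [hexp] using hK.le_mul_norm_sub (exp (t • a)) 0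

namespace Module.Basis

variable {V : Type*} [NormedAddCommGroup V] [NormedSpace ℝ V] [FiniteDimensional ℝ V]
  {ι : Type*} [Fintype ι] [DecidableEq ι]

noncomputable def complexify (b : Basis ι ℝ V) :
    (V →L[ℝ] V) →ₐ[ℝ] ((ι → ℂ) →L[ℂ] (ι → ℂ)) :=
  (((Module.End.toContinuousLinearMap (ι → ℂ)).restrictScalars ℝ).toAlgHom.comp
    ((Matrix.toLinAlgEquiv'.restrictScalars ℝ).toAlgHom.comp
      (((Algebra.ofId ℝ ℂ).mapMatrix).comp
        ((LinearMap.toMatrixAlgEquiv b).toAlgHom.comp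
          (Module.End.toContinuousLinearMap V).symm.toAlgHom))))

lemma complexify_apply (b : Basis ι ℝ V) (B : V →L[ℝ] V) :
    (b.complexify B : Module.End ℂ (ι → ℂ)) =
      Matrix.toLin' ((LinearMap.toMatrix b b B).map (algebraMap ℝ ℂ)) :=
  rfl

lemma complexify_injective (b : Basis ι ℝ V) :
    Function.Injective b.complexify :=
  (Module.End.toContinuousLinearMap _).injective.comp <| Matrix.toLin'.injective.comp <|
    (Matrix.map_injective (algebraMap ℝ ℂ).injective).comp <|
      (LinearMap.toMatrixAlgEquiv b).injective.comp
        (Module.End.toContinuousLinearMap V).symm.injective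

lemma charpoly_complexify (b : Basis ι ℝ V) (B : V →L[ℝ] V) :
    LinearMap.charpoly (b.complexify B : Module.End ℂ (ι → ℂ)) =
      (LinearMap.charpoly (B : Module.End ℝ V)).map (algebraMap ℝ ℂ) := by
  rw [complexify_apply, Matrix.charpoly_toLin', Matrix.charpoly_map, LinearMap.charpoly_toMatrix]

end Module.Basis

namespace ContinuousLinearMap

theorem isBigO_exp_smul_of_re_lt_zero {V : Type*} [NormedAddCommGroup V]
    [NormedSpace ℝ V] [FiniteDimensional ℝ V] (B : V →L[ℝ] V)
    (hB : ∀ σ : ℂ, ((LinearMap.charpoly (B : V →ₗ[ℝ] V)).map (algebraMap ℝ ℂ)).IsRoot σ →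
      σ.re < 0) :
    ∃ ε > 0, (fun t : ℝ => exp (t • B)) =O[atTop] fun t => Real.exp (-ε * t) := by
  let b := Module.finBasis ℝ V
  have hspec : ∀ z ∈ spectrum ℂ (exp (b.complexify B)), ‖z‖ < 1 :=
    fun z => norm_lt_one_of_mem_spectrum_exp fun c hc => hB c <| by
      rwa [← b.charpoly_complexify, ← hasEigenvalue_iff_isRoot_charpoly]
  obtain ⟨ε, hε, hO⟩ := isBigO_exp_smul_of_forall_mem_spectrum_exp hspec
  exact ⟨ε, hε, b.complexify.isBigO_exp_smul_of_injective b.complexify_injective B hO⟩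

section Lyapunov

variable {V : Type*} [NormedAddCommGroup V] [InnerProductSpace ℝ V]

lemma exp_smul_adjoint [CompleteSpace V] (B : V →L[ℝ] V) (t : ℝ) :
    exp (t • adjoint B) = adjoint (exp (t • B)) := by
  rw [← star_eq_adjoint (exp _), star_exp, star_smul, star_trivial, star_eq_adjoint]

theorem integrableOn_exp_smul_comp_comp_exp_smul_adjoint [CompleteSpace V]
    (B A : V →L[ℝ] V) {ε : ℝ} (hε : 0 < ε)
    (hB : (fun t : ℝ => exp (t • B)) =O[atTop] fun t => Real.exp (-ε * t)) :
    IntegrableOn (fun t : ℝ => exp (t • B) ∘L A ∘L exp (t • adjoint B)) (Ioi 0) := by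
  let := NormedAlgebra.restrictScalars ℚ ℝ (V →L[ℝ] V)
  have hexp : Continuous fun t : ℝ => exp (t • B) :=
    exp_continuous.comp (continuous_id.smul continuous_const)
  have hcont : Continuous fun t : ℝ => exp (t • B) ∘L A ∘L exp (t • adjoint B) := by
    simp_rw [exp_smul_adjoint]
    exact hexp.clm_comp (continuous_const.clm_comp (adjoint.continuous.comp hexp))
  have hO : (fun t : ℝ => exp (t • B) ∘L A ∘L exp (t • adjoint B)) =O[atTop]
      fun t => Real.exp (-(2 * ε) * t) := by
    have hsq := (hB.norm_left.mul hB.norm_left).const_mul_left ‖A‖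
    refine (IsBigO.of_bound 1 (Eventually.of_forall fun t => ?_)).trans
      (hsq.congr_right fun t => by rw [← Real.exp_add]; ring_nf)
    rw [one_mul, Real.norm_of_nonneg (by positivity), exp_smul_adjoint]
    calc _ ≤ ‖exp (t • B)‖ * (‖A‖ * ‖adjoint (exp (t • B))‖) :=
          (opNorm_comp_le _ _).trans (by gcongr; exact opNorm_comp_le _ _)
      _ = _ := by rw [LinearIsometryEquiv.norm_map]; ring
  refine ((hcont.locallyIntegrable.locallyIntegrableOn _).integrableOn_of_isBigO_atTop hO
    ⟨Ioi 0, Ioi_mem_atTop 0, exp_neg_integrableOn_Ioi 0 (by positivity)⟩).mono_set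
    Ioi_subset_Ici_self

theorem inner_integral_apply_self_pos [CompleteSpace V] {α : Type*} [MeasurableSpace α]
    {μ : Measure α} (hμ : μ ≠ 0) {F : α → V →L[ℝ] V} (hF : Integrable F μ) {v : V}
    (hpos : ∀ x, 0 < ⟪F x v, v⟫) : 0 < ⟪(∫ x, F x ∂μ) v, v⟫ := by
  let φ : (V →L[ℝ] V) →L[ℝ] ℝ := (innerSL ℝ v).comp (apply ℝ V v)
  have hφ : ∀ X : V →L[ℝ] V, φ X = ⟪X v, v⟫ := fun X => real_inner_comm _ _
  rw [← hφ, ← φ.integral_comp_comm hF, integral_pos_iff_support_of_nonneg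
    (fun x => (hφ (F x)).trans_ge (hpos x).le) (φ.integrable_comp hF)]
  have hsupp : Function.support (fun x => φ (F x)) = univ :=
    eq_univ_of_forall fun x => (hφ (F x) ▸ hpos x).ne'
  rw [hsupp]
  exact Measure.measure_univ_pos.2 hμ

end Lyapunov

end ContinuousLinearMap

theorem lyapunov_solution_positive_definite_general
    {V : Type*} [NormedAddCommGroup V] [InnerProductSpace ℝ V] [FiniteDimensional ℝ V]
    (B A : V →L[ℝ] V)
    (hB : ∀ σ : ℂ, ((LinearMap.charpoly (B : V →ₗ[ℝ] V)).map (algebraMap ℝ ℂ)).IsRoot σ →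
      σ.re < 0)
    (hApos : ∀ v : V, v ≠ 0 → 0 < ⟪A v, v⟫) :
    ∀ v : V, v ≠ 0 →
      0 < ⟪((2 : ℝ) • ∫ s in Set.Ioi (0 : ℝ),
          NormedSpace.exp (s • B) ∘L A ∘L
            NormedSpace.exp (s • (ContinuousLinearMap.adjoint B))) v, v⟫ := by
  intro v hv
  let := NormedAlgebra.restrictScalars ℚ ℝ (V →L[ℝ] V)
  obtain ⟨ε, hε, hdecay⟩ := B.isBigO_exp_smul_of_re_lt_zero hB
  have hpos (s : ℝ) : 0 < ⟪(exp (s • B) ∘L A ∘L exp (s • B.adjoint)) v, v⟫ := by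
    have hw : exp (s • B.adjoint) v ≠ 0 :=
      ((ContinuousLinearMap.isUnit_iff_bijective.1 (isUnit_exp _)).1.ne_iff' (map_zero _)).2 hv
    rw [ContinuousLinearMap.comp_apply, ContinuousLinearMap.comp_apply,
      ← ContinuousLinearMap.adjoint_adjoint (exp (s • B)),
      ← ContinuousLinearMap.exp_smul_adjoint, ContinuousLinearMap.adjoint_inner_left]
    exact hApos _ hw
  rw [smul_apply, real_inner_smul_left]
  exact mul_pos two_pos (ContinuousLinearMap.inner_integral_apply_self_pos (by simp)
    (B.integrableOn_exp_smul_comp_comp_exp_smul_adjoint A hε hdecay) hpos)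

theorem lyapunov_solution_positive_definite
    {V : Type*} [NormedAddCommGroup V] [InnerProductSpace ℝ V] [FiniteDimensional ℝ V]
    (B A : V →L[ℝ] V)
    (hB : ∀ σ : ℂ, ((LinearMap.charpoly (B : V →ₗ[ℝ] V)).map (algebraMap ℝ ℂ)).IsRoot σ →
      σ.re < 0)
    (hA : IsSelfAdjoint A)
    (hApos : ∀ v : V, v ≠ 0 → 0 < ⟪A v, v⟫) :
    ∀ v : V, v ≠ 0 →
      0 < ⟪((2 : ℝ) • ∫ s in Set.Ioi (0 : ℝ),
          NormedSpace.exp (s • B) ∘L A ∘L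
            NormedSpace.exp (s • (ContinuousLinearMap.adjoint B))) v, v⟫ :=
  lyapunov_solution_positive_definite_general B A hB hApos
end

section
/- Define the drift operator B_0 := (P^π_D)^T − (1−λ)·I, acting on M_0(D) = {ξ ∈ ℝ^D : ∑_x ξ(x) = 0}. Then every complex eigenvalue τ of B_0 (restricted to M_0(D)) satisfies Re τ ≤ −γ, where γ is the spectral gap of P_D. -/
open Matrix BigOperators

/-!
Write `ρ = 1 - λ`. An eigenvector `v` of `B₀` with eigenvalue `τ` and `∑ v = 0` satisfies
`v P = (τ + ρ) v + c π` for a scalar `c`. If `τ ≠ 0`, then `v + (c / τ) π` is a nonzero left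
eigenvector of `P` for the eigenvalue `τ + ρ ≠ ρ`, so the spectral gap gives `Re τ ≤ -γ`.

If `τ = 0`, the real and imaginary parts `a` of `v` satisfy `a P = ρ a + d π`. For the least `r`
with `a ≤ r π`, the vector `r π - a` is nonnegative, vanishes at some point, and satisfies
`(r π - a) P = ρ (r π - a) - d π`; evaluating there gives `d ≤ 0`, and `-a` gives `d ≥ 0`.
So `r π - a` is a nonnegative left eigenvector with a zero, hence zero by irreducibility;
then `a = r π` and `∑ a = 0` force `a = 0`.
-/

open Finset

section Eigval

variable {D : Type*} [Fintype D] [DecidableEq D]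

theorem isEigval_iff_det_sub_smul_one_eq_zero (M : Matrix D D ℂ) (σ : ℂ) :
    IsEigval M σ ↔ (M - σ • 1).det = 0 := by
  simp only [IsEigval, ← exists_mulVec_eq_zero_iff, sub_mulVec, smul_mulVec, one_mulVec,
    sub_eq_zero]

theorem isEigval_transpose_iff (M : Matrix D D ℂ) (σ : ℂ) : IsEigval Mᵀ σ ↔ IsEigval M σ := by
  rw [isEigval_iff_det_sub_smul_one_eq_zero, isEigval_iff_det_sub_smul_one_eq_zero,
    ← det_transpose, transpose_sub, transpose_smul, transpose_one, transpose_transpose]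

end Eigval

theorem vecMul_pow_of_vecMul_eq_smul {D R : Type*} [Fintype D] [DecidableEq D] [CommSemiring R]
    {M : Matrix D D R} {r : R} {b : D → R} (hb : b ᵥ* M = r • b) (n : ℕ) :
    b ᵥ* M ^ n = r ^ n • b := by
  induction n with
  | zero => simp
  | succ n ih => rw [pow_succ, ← vecMul_vecMul, ih, smul_vecMul, hb, smul_smul, pow_succ]

theorem comp_vecMul_map_ofReal {D : Type*} [Fintype D] (f : ℂ →ₗ[ℝ] ℝ) (v : D → ℂ)
    (P : Matrix D D ℝ) : (f ∘ v) ᵥ* P = f ∘ (v ᵥ* P.map Complex.ofReal) := by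
  funext y
  simp only [vecMul, dotProduct, Function.comp_apply, map_apply, map_sum]
  congr 1 with x
  rw [mul_comm (v x), ← Complex.real_smul, map_smul, smul_eq_mul, mul_comm]

section Nonneg

variable {D : Type*} [Fintype D] {P : Matrix D D ℝ} {ρ : ℝ}

theorem exists_nonneg_smul_sub_apply_eq_zero [Nonempty D] {π : D → ℝ} (hπ : ∀ x, 0 < π x)
    (a : D → ℝ) : ∃ (r : ℝ) (x₀ : D), 0 ≤ r • π - a ∧ (r • π - a) x₀ = 0 := by
  obtain ⟨x₀, -, hmax⟩ := exists_max_image univ (fun x => a x / π x) univ_nonempty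
  refine ⟨a x₀ / π x₀, x₀, fun x => ?_, ?_⟩
  · simpa using (div_le_iff₀ (hπ x)).1 (hmax x (mem_univ x))
  · simp [div_mul_cancel₀ _ (hπ x₀).ne']

theorem smul_sub_vecMul_eq {π a : D → ℝ} {d : ℝ} (hπ : π ᵥ* P = ρ • π)
    (ha : a ᵥ* P = ρ • a + d • π) (r : ℝ) :
    (r • π - a) ᵥ* P = ρ • (r • π - a) - d • π := by
  rw [sub_vecMul, smul_vecMul, hπ, ha]
  module

theorem nonpos_of_vecMul_eq_smul_add_smul [Nonempty D] (hnn : ∀ x y, 0 ≤ P x y) {π a : D → ℝ}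
    {d : ℝ} (hπpos : ∀ x, 0 < π x) (hπ : π ᵥ* P = ρ • π) (ha : a ᵥ* P = ρ • a + d • π) :
    d ≤ 0 := by
  obtain ⟨r, x₀, hb0, hbx₀⟩ := exists_nonneg_smul_sub_apply_eq_zero hπpos a
  have hx₀ : ((r • π - a) ᵥ* P) x₀ = -d * π x₀ := by
    rw [smul_sub_vecMul_eq hπ ha r]
    simp [hbx₀]
  have hnonneg : 0 ≤ ((r • π - a) ᵥ* P) x₀ :=
    sum_nonneg fun z _ => mul_nonneg (hb0 z) (hnn z x₀)
  rw [hx₀] at hnonneg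
  nlinarith [hπpos x₀]

variable [DecidableEq D]

theorem MatIrreducible.eq_zero_of_nonneg_of_vecMul_eq_smul (hirr : MatIrreducible P)
    (hnn : ∀ x y, 0 ≤ P x y) {b : D → ℝ} (hb0 : 0 ≤ b) (hb : b ᵥ* P = ρ • b) {y : D}
    (hy : b y = 0) : b = 0 := by
  funext x
  obtain ⟨n, hn⟩ := hirr x y
  have hsum : ∑ z, b z * (P ^ n) z y = 0 := by
    simpa [hy, vecMul, dotProduct] using congrFun (vecMul_pow_of_vecMul_eq_smul hb n) y
  have hx := (sum_eq_zero_iff_of_nonneg fun z _ =>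
    mul_nonneg (hb0 z) (pow_apply_nonneg hnn n z y)).1 hsum x (mem_univ x)
  exact (mul_eq_zero.1 hx).resolve_right hn.ne'

theorem MatIrreducible.pos_of_nonneg_of_vecMul_eq_smul (hirr : MatIrreducible P)
    (hnn : ∀ x y, 0 ≤ P x y) {b : D → ℝ} (hb0 : 0 ≤ b) (hb : b ᵥ* P = ρ • b) (hne : b ≠ 0)
    (x : D) : 0 < b x :=
  (hb0 x).lt_of_ne' fun hx => hne (hirr.eq_zero_of_nonneg_of_vecMul_eq_smul hnn hb0 hb hx)

theorem MatIrreducible.eq_zero_of_vecMul_eq_smul_add_smul (hirr : MatIrreducible P)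
    (hnn : ∀ x y, 0 ≤ P x y) {π a : D → ℝ} {d : ℝ} (hπpos : ∀ x, 0 < π x)
    (hπsum : ∑ x, π x = 1) (hπ : π ᵥ* P = ρ • π) (ha : a ᵥ* P = ρ • a + d • π)
    (hsum : ∑ x, a x = 0) : a = 0 := by
  cases isEmpty_or_nonempty D
  · exact Subsingleton.elim _ _
  have hd : d = 0 := by
    have h₁ := nonpos_of_vecMul_eq_smul_add_smul hnn hπpos hπ ha
    have h₂ := nonpos_of_vecMul_eq_smul_add_smul hnn hπpos hπ (a := -a) (d := -d)
      (by rw [neg_vecMul, ha]; module)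
    linarith
  subst hd
  obtain ⟨r, x₀, hb0, hbx₀⟩ := exists_nonneg_smul_sub_apply_eq_zero hπpos a
  have hb := hirr.eq_zero_of_nonneg_of_vecMul_eq_smul hnn hb0
    (by simpa using smul_sub_vecMul_eq hπ ha r) hbx₀
  have ha' : a = r • π := (sub_eq_zero.1 hb).symm
  have hr : r = 0 := by simpa [ha', ← mul_sum, hπsum] using hsum
  simp [ha', hr]

theorem MatIrreducible.eq_zero_of_vecMul_map_ofReal_eq (hirr : MatIrreducible P)
    (hnn : ∀ x y, 0 ≤ P x y) {π : D → ℝ} (hπpos : ∀ x, 0 < π x) (hπsum : ∑ x, π x = 1)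
    (hπ : π ᵥ* P = ρ • π) {v : D → ℂ} {c : ℂ}
    (hv : v ᵥ* P.map Complex.ofReal = (ρ : ℂ) • v + c • (Complex.ofReal ∘ π))
    (hsum : ∑ x, v x = 0) : v = 0 := by
  have hpart (f : ℂ →ₗ[ℝ] ℝ) : f ∘ v = 0 := by
    refine hirr.eq_zero_of_vecMul_eq_smul_add_smul hnn hπpos hπsum hπ (d := f c) ?_ ?_
    · funext y
      simp [comp_vecMul_map_ofReal, hv, mul_comm c, ← Complex.real_smul, mul_comm (π y)]
    · simpa [map_sum] using congrArg f hsum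
  funext x
  exact Complex.ext (congrFun (hpart Complex.reLm) x) (congrFun (hpart Complex.imLm) x)

end Nonneg

section Restart

variable {D : Type*} [Fintype D] [DecidableEq D]

/-- The matrix `P^π_D`: mass killed at `x` is restarted from `π`. -/
def restartMatrix (P : Matrix D D ℝ) (π : D → ℝ) : Matrix D D ℝ :=
  of fun x y => P x y + (1 - ∑ z, P x z) * π y

theorem vecMul_map_ofReal_eq_of_drift_eigvec {P : Matrix D D ℝ} {π : D → ℝ} {ρ : ℝ} {τ : ℂ}
    {v : D → ℂ} (h : ((restartMatrix P π)ᵀ - ρ • 1).map Complex.ofReal *ᵥ v = τ • v) :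
    v ᵥ* P.map Complex.ofReal = (τ + ρ) • v +
      (-∑ x, ((1 - ∑ z, P x z : ℝ) : ℂ) * v x) • (Complex.ofReal ∘ π) := by
  funext y
  have hy := congrFun h y
  simp only [mulVec, dotProduct, vecMul, restartMatrix, map_apply, Matrix.sub_apply,
    transpose_apply, of_apply, Matrix.smul_apply, one_apply, smul_eq_mul, mul_ite, mul_one,
    mul_zero, one_mul, zero_mul, Complex.ofReal_sub, Complex.ofReal_add, Complex.ofReal_mul,
    Complex.ofReal_sum, Complex.ofReal_one, Complex.ofReal_zero, apply_ite Complex.ofReal,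
    add_mul, sub_mul, mul_right_comm _ (π y : ℂ), ite_mul, sum_sub_distrib, sum_add_distrib,
    ← mul_sum, ← sum_mul, sum_ite_eq, mem_univ, ↓reduceIte, Pi.smul_apply, mul_comm (v _),
    neg_sub, Pi.add_apply, Function.comp_apply] at hy ⊢
  linear_combination hy

theorem isEigval_of_vecMul_eq_smul_add_smul {P : Matrix D D ℝ} {ρ : ℝ} {π : D → ℝ}
    (hπsum : ∑ x, π x = 1) (hπ : π ᵥ* P = ρ • π) {v : D → ℂ} (hv0 : v ≠ 0)
    (hsum : ∑ x, v x = 0) {σ c : ℂ}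
    (hv : v ᵥ* P.map Complex.ofReal = σ • v + c • (Complex.ofReal ∘ π)) (hσ : σ ≠ ρ) :
    IsEigval (P.map Complex.ofReal) σ := by
  set πℂ : D → ℂ := Complex.ofReal ∘ π
  have hπℂ : πℂ ᵥ* P.map Complex.ofReal = (ρ : ℂ) • πℂ := by
    funext y
    exact (RingHom.map_vecMul Complex.ofRealHom P π y).symm.trans (by simp [hπ, πℂ])
  have hπℂsum : ∑ x, πℂ x = 1 := by simp [πℂ, ← Complex.ofReal_sum, hπsum]
  set α := c / (σ - ρ)
  have hα : α * (σ - ρ) = c := div_mul_cancel₀ _ (sub_ne_zero.2 hσ)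
  have hw : (v + α • πℂ) ᵥ* P.map Complex.ofReal = σ • (v + α • πℂ) := by
    rw [add_vecMul, smul_vecMul, hv, hπℂ, ← hα]
    module
  have hw0 : v + α • πℂ ≠ 0 := by
    intro h
    have hα0 : α = 0 := by
      simpa [sum_add_distrib, hsum, ← mul_sum, hπℂsum] using congrArg (fun u => ∑ x, u x) h
    exact hv0 (by simpa [hα0] using h)
  exact (isEigval_transpose_iff _ _).1 ⟨_, hw0, by rw [mulVec_transpose, hw]⟩

end Restart

theorem drift_operator_spectrum_general
    {D : Type*} [Fintype D] [DecidableEq D]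
    (P : Matrix D D ℝ)
    (hnn : ∀ x y, 0 ≤ P x y)
    (hirr : MatIrreducible P)
    (lam : ℝ)
    (π : D → ℝ)
    (hπnn : ∀ x, 0 ≤ π x) (hπsum : ∑ x, π x = 1)
    (hπeig : Pᵀ.mulVec π = (1 - lam) • π)
    (γ : ℝ)
    (hgap_ub : ∀ σ : ℂ, IsEigval (P.map Complex.ofReal) σ → σ ≠ ((1 - lam : ℝ) : ℂ) →
      σ.re ≤ 1 - lam - γ) :
    ∀ τ : ℂ,
      (∃ v : D → ℂ, v ≠ 0 ∧ (∑ z, v z = 0) ∧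
        (((Matrix.of fun x y => P x y + (1 - ∑ z, P x z) * π y)ᵀ
            - (1 - lam) • (1 : Matrix D D ℝ)).map Complex.ofReal).mulVec v = τ • v) →
      τ.re ≤ -γ := by
  rintro τ ⟨v, hv0, hvsum, heig⟩
  rw [mulVec_transpose] at hπeig
  have hπpos : ∀ x, 0 < π x := hirr.pos_of_nonneg_of_vecMul_eq_smul hnn hπnn hπeig
    fun h => by simp [h] at hπsum
  have hv := vecMul_map_ofReal_eq_of_drift_eigvec (ρ := 1 - lam) heig
  have hτ : τ ≠ 0 := by
    rintro rfl
    exact hv0 (hirr.eq_zero_of_vecMul_map_ofReal_eq hnn hπpos hπsum hπeig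
      (by rwa [zero_add] at hv) hvsum)
  have hσ : τ + ((1 - lam : ℝ) : ℂ) ≠ ((1 - lam : ℝ) : ℂ) := by simpa using hτ
  have hgap := hgap_ub _ (isEigval_of_vecMul_eq_smul_add_smul hπsum hπeig hv0 hvsum hv hσ) hσ
  simp only [Complex.add_re, Complex.ofReal_re] at hgap
  linarith

theorem drift_operator_spectrum
    {D : Type*} [Fintype D] [DecidableEq D]
    (hcard : 2 ≤ Fintype.card D)
    (P : Matrix D D ℝ)
    (hnn : ∀ x y, 0 ≤ P x y)
    (hrow : ∀ x, ∑ y, P x y ≤ 1)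
    (hirr : MatIrreducible P)
    (lam : ℝ)
    (hsr_ub : ∀ σ : ℂ, IsEigval (P.map Complex.ofReal) σ → ‖σ‖ ≤ 1 - lam)
    (hsr_attained : ∃ σ : ℂ, IsEigval (P.map Complex.ofReal) σ ∧ ‖σ‖ = 1 - lam)
    (π : D → ℝ)
    (hπnn : ∀ x, 0 ≤ π x) (hπsum : ∑ x, π x = 1)
    (hπeig : Pᵀ.mulVec π = (1 - lam) • π)
    (γ : ℝ) (hγpos : 0 < γ)
    (hgap_ub : ∀ σ : ℂ, IsEigval (P.map Complex.ofReal) σ → σ ≠ ((1 - lam : ℝ) : ℂ) →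
      σ.re ≤ 1 - lam - γ)
    (hgap_attained : ∃ σ : ℂ, IsEigval (P.map Complex.ofReal) σ ∧ σ ≠ ((1 - lam : ℝ) : ℂ) ∧
      σ.re = 1 - lam - γ) :
    ∀ τ : ℂ,
      (∃ v : D → ℂ, v ≠ 0 ∧ (∑ z, v z = 0) ∧
        (((Matrix.of fun x y => P x y + (1 - ∑ z, P x z) * π y)ᵀ
            - (1 - lam) • (1 : Matrix D D ℝ)).map Complex.ofReal).mulVec v = τ • v) →
      τ.re ≤ -γ :=
  drift_operator_spectrum_general P hnn hirr lam π hπnn hπsum hπeig γ hgap_ub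
end
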